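/- arXiv:1910.12005 — 3 statements merged into one kernel-verified Lean document; each statement's English description precedes it below -/
import Mathlib

section
/- Let V be a finite-dimensional vector space with dim V ≥ 3 and 2 ≤ m ≤ dim V − 2. Then the Plücker map G(m,V) → P(Λ^m V), V_m ↦ Λ^m V_m, is not a standard extension; i.e., there is no subspace U ⊆ Λ^m V with a surjection ε : U → V such that Λ^m V_m = ε⁻¹(V_m) as lines for all V_m, nor such a description after composing with the duality isomorphism. -/
open Module

set_option maxHeartbeats 1000000
set_option synthInstance.maxHeartbeats 1000000

section Aux

variable {M N : Type*} [AddCommGroup M] [Module ℂ M] [AddCommGroup N] [Module ℂ N]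

/-- Expansion of a multilinear map in a spanning family. -/
lemma multilinear_mem_span {m : ℕ} {ι : Type*} [Fintype ι] [DecidableEq ι]
    (f : MultilinearMap ℂ (fun _ : Fin m => M) N) (b : ι → M)
    (hb : Submodule.span ℂ (Set.range b) = ⊤) (v : Fin m → M) :
    f v ∈ Submodule.span ℂ (Set.range fun s : Fin m → ι => f (b ∘ s)) := by
  have hv : ∀ i, ∃ c : ι → ℂ, ∑ j, c j • b j = v i := fun i =>
    (Submodule.mem_span_range_iff_exists_fun ℂ).1 (hb ▸ Submodule.mem_top)
  choose c hc using hv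
  have h1 : f v = ∑ s : Fin m → ι, (∏ i, c i (s i)) • f (b ∘ s) := by
    conv_lhs => rw [show v = fun i => ∑ j, c i j • b j from funext fun i => (hc i).symm]
    rw [f.map_sum (g := fun i j => c i j • b j)]
    refine Finset.sum_congr rfl fun s _ => ?_
    rw [← f.map_smul_univ]
    rfl
  rw [h1]
  exact Submodule.sum_mem _ fun s _ =>
    Submodule.smul_mem _ _ (Submodule.subset_span ⟨s, rfl⟩)

lemma exteriorPower_fd [FiniteDimensional ℂ M] (m : ℕ) :
    FiniteDimensional ℂ (⋀[ℂ]^m M) := by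
  classical
  let b := finBasis ℂ M
  have hle : (⋀[ℂ]^m M : Submodule ℂ (ExteriorAlgebra ℂ M)) ≤
      Submodule.span ℂ (Set.range fun s : Fin m → Fin (finrank ℂ M) =>
        ExteriorAlgebra.ιMulti ℂ m (b ∘ s)) := by
    rw [← ExteriorAlgebra.ιMulti_span_fixedDegree, Submodule.span_le]
    rintro x ⟨v, rfl⟩
    exact multilinear_mem_span (ExteriorAlgebra.ιMulti ℂ m).toMultilinearMap b b.span_eq v
  haveI := FiniteDimensional.span_of_finite ℂ
    (Set.finite_range fun s : Fin m → Fin (finrank ℂ M) => ExteriorAlgebra.ιMulti ℂ m (b ∘ s))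
  exact Submodule.finiteDimensional_of_le hle

lemma exteriorPower_finrank_le_one [FiniteDimensional ℂ M] {m : ℕ}
    (h : finrank ℂ M = m) : finrank ℂ (⋀[ℂ]^m M) ≤ 1 := by
  classical
  let b := finBasisOfFinrankEq ℂ M h
  have hle : (⋀[ℂ]^m M : Submodule ℂ (ExteriorAlgebra ℂ M)) ≤
      (ℂ ∙ ExteriorAlgebra.ιMulti ℂ m (b : Fin m → M)) := by
    rw [← ExteriorAlgebra.ιMulti_span_fixedDegree, Submodule.span_le]
    rintro x ⟨v, rfl⟩
    have h2 := multilinear_mem_span (ExteriorAlgebra.ιMulti ℂ m).toMultilinearMap b b.span_eq v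
    refine Submodule.span_le.2 ?_ h2
    rintro y ⟨s, rfl⟩
    by_cases hs : Function.Injective s
    · set σ := Equiv.ofBijective s (Finite.injective_iff_bijective.1 hs) with hσ
      have hbs : (b : Fin m → M) ∘ s = (b : Fin m → M) ∘ σ := rfl
      have h3 : ExteriorAlgebra.ιMulti ℂ m (⇑b ∘ ⇑σ) =
          Equiv.Perm.sign σ • ExteriorAlgebra.ιMulti ℂ m (M := M) ⇑b :=
        AlternatingMap.map_perm (ExteriorAlgebra.ιMulti ℂ m (M := M)) ⇑b σ
      show ExteriorAlgebra.ιMulti ℂ m ((b : Fin m → M) ∘ s) ∈ _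
      rw [hbs, h3]
      rcases Int.units_eq_one_or (Equiv.Perm.sign σ) with hsgn | hsgn
      · rw [hsgn, one_smul]
        exact Submodule.mem_span_singleton_self _
      · rw [hsgn]
        have h4 : (-1 : ℤˣ) • ExteriorAlgebra.ιMulti ℂ m (M := M) ⇑b
            = -ExteriorAlgebra.ιMulti ℂ m (M := M) ⇑b := by simp
        rw [h4]
        exact Submodule.neg_mem _ (Submodule.mem_span_singleton_self _)
    · rw [Function.not_injective_iff] at hs
      obtain ⟨i, j, hij, hne⟩ := hs
      show ExteriorAlgebra.ιMulti ℂ m ((b : Fin m → M) ∘ s) ∈ _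
      rw [(ExteriorAlgebra.ιMulti ℂ m (M := M)).map_eq_zero_of_eq
        ((b : Fin m → M) ∘ s) (by simp [Function.comp, hij]) hne]
      exact Submodule.zero_mem _
  calc finrank ℂ (⋀[ℂ]^m M) ≤ finrank ℂ (ℂ ∙ ExteriorAlgebra.ιMulti ℂ m (b : Fin m → M)) :=
        Submodule.finrank_mono hle
    _ ≤ 1 := by
        by_cases hx : ExteriorAlgebra.ιMulti ℂ m (b : Fin m → M) = 0
        · rw [hx, Submodule.span_zero_singleton, finrank_bot]; omega
        · rw [finrank_span_singleton hx]

end Aux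

/-- The Plücker line of an `m`-dimensional subspace `Vm ⊆ V`: the image of
`⋀^m Vm` inside `⋀^m V`, regarded as a subspace of the vector space `⋀^m V`. -/
noncomputable def pluckerLine {V : Type*} [AddCommGroup V] [Module ℂ V]
    (m : ℕ) (Vm : Submodule ℂ V) : Submodule ℂ ↥(⋀[ℂ]^m V) :=
  Submodule.comap (⋀[ℂ]^m V).subtype
    (Submodule.map (ExteriorAlgebra.map Vm.subtype).toLinearMap (⋀[ℂ]^m ↥Vm))

lemma pluckerLine_finrank_le_one {V : Type*} [AddCommGroup V] [Module ℂ V]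
    {m : ℕ} (Vm : Submodule ℂ V) [FiniteDimensional ℂ V] (hVm : finrank ℂ Vm = m) :
    finrank ℂ (pluckerLine m Vm) ≤ 1 := by
  set T : Submodule ℂ (ExteriorAlgebra ℂ ↥Vm) := ⋀[ℂ]^m ↥Vm with hT
  haveI : FiniteDimensional ℂ T := exteriorPower_fd m
  set S := Submodule.map (ExteriorAlgebra.map Vm.subtype).toLinearMap T with hS
  haveI : Module.Finite ℂ S := Module.Finite.map _ _
  calc finrank ℂ (pluckerLine m Vm)
      = finrank ℂ (Submodule.map (⋀[ℂ]^m V).subtype (pluckerLine m Vm)) :=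
        (Submodule.finrank_map_subtype_eq _ _).symm
    _ = finrank ℂ ((⋀[ℂ]^m V) ⊓ S : Submodule ℂ (ExteriorAlgebra ℂ V)) := by
        rw [pluckerLine, Submodule.map_comap_subtype]
    _ ≤ finrank ℂ S := Submodule.finrank_mono inf_le_right
    _ ≤ finrank ℂ T := Submodule.finrank_map_le _ _
    _ ≤ 1 := exteriorPower_finrank_le_one hVm

lemma comap_key {V : Type*} [AddCommGroup V] [Module ℂ V] [FiniteDimensional ℂ V]
    {m : ℕ} (Vm : Submodule ℂ V) (hVm : finrank ℂ Vm = m)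
    {W : Type*} [AddCommGroup W] [Module ℂ W] [FiniteDimensional ℂ W]
    (U : Submodule ℂ W) (ε : U →ₗ[ℂ] V) (hsurj : Function.Surjective ε) :
    finrank ℂ (Submodule.comap ε Vm) + finrank ℂ V = finrank ℂ U + m := by
  have hq : finrank ℂ (V ⧸ Vm) + m = finrank ℂ V := by
    rw [← hVm]; exact Submodule.finrank_quotient_add_finrank Vm
  have hker : Submodule.comap ε Vm = LinearMap.ker (Vm.mkQ ∘ₗ ε) := by
    rw [LinearMap.ker_comp, Submodule.ker_mkQ]
  have hrange : LinearMap.range (Vm.mkQ ∘ₗ ε) = ⊤ := by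
    rw [LinearMap.range_comp, LinearMap.range_eq_top.2 hsurj, Submodule.map_top,
      Submodule.range_mkQ]
  have hrn := LinearMap.finrank_range_add_finrank_ker (Vm.mkQ ∘ₗ ε)
  rw [hrange, finrank_top, ← hker] at hrn
  omega

lemma finrank_U_ge {V : Type*} [AddCommGroup V] [Module ℂ V] [FiniteDimensional ℂ V]
    {W : Type*} [AddCommGroup W] [Module ℂ W] [FiniteDimensional ℂ W]
    (U : Submodule ℂ W) (ε : U →ₗ[ℂ] V) (hsurj : Function.Surjective ε) :
    finrank ℂ V ≤ finrank ℂ U := by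
  have := LinearMap.finrank_range_add_finrank_ker ε
  rw [LinearMap.range_eq_top.2 hsurj, finrank_top] at this
  omega

lemma strict_aux {V E : Type*} [AddCommGroup V] [Module ℂ V] [FiniteDimensional ℂ V]
    [AddCommGroup E] [Module ℂ E] [FiniteDimensional ℂ E]
    {m : ℕ} (hm : 2 ≤ m) (Vm : Submodule ℂ V) (hVm : finrank ℂ Vm = m)
    (L : Submodule ℂ E) (hL : finrank ℂ L ≤ 1)
    (U : Submodule ℂ E) (ε : U →ₗ[ℂ] V) (hsurj : Function.Surjective ε)
    (h1 : L = Submodule.map U.subtype (Submodule.comap ε Vm)) : False := by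
  have h2 := comap_key Vm hVm U ε hsurj
  have h3 : finrank ℂ L = finrank ℂ (Submodule.comap ε Vm) := by
    rw [h1, Submodule.finrank_map_subtype_eq]
  have h4 := finrank_U_ge U ε hsurj
  omega

lemma dual_aux {V E : Type*} [AddCommGroup V] [Module ℂ V] [FiniteDimensional ℂ V]
    [AddCommGroup E] [Module ℂ E] [FiniteDimensional ℂ E]
    {m : ℕ} (hmn : m + 2 ≤ finrank ℂ V) (Vm : Submodule ℂ V) (hVm : finrank ℂ Vm = m)
    (L : Submodule ℂ E) (hL : finrank ℂ L ≤ 1)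
    (U : Submodule ℂ (Module.Dual ℂ E)) (ε : U →ₗ[ℂ] V) (hsurj : Function.Surjective ε)
    (h1 : L = (Submodule.map U.subtype (Submodule.comap ε Vm)).dualCoannihilator) : False := by
  have h2 := comap_key Vm hVm U ε hsurj
  have h3 : finrank ℂ (Submodule.map U.subtype (Submodule.comap ε Vm))
      = finrank ℂ (Submodule.comap ε Vm) := Submodule.finrank_map_subtype_eq _ _
  have h4 := Subspace.finrank_add_finrank_dualCoannihilator_eq
    (Submodule.map U.subtype (Submodule.comap ε Vm))
  rw [← h1] at h4
  have h5 : finrank ℂ U ≤ finrank ℂ (Module.Dual ℂ E) := Submodule.finrank_le U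
  rw [Subspace.dual_finrank_eq] at h5
  omega

/-- For `dim V ≥ 3` and `2 ≤ m ≤ dim V − 2`, the Plücker embedding
`G(m,V) → ℙ(⋀^m V)`, `Vm ↦ ⋀^m Vm`, is not a standard extension: there is no
subspace `U ⊆ ⋀^m V` with a surjection `ε : U ↠ V` such that the Plücker line of
`Vm` is `ε⁻¹(Vm)` for all `Vm` (strict case), nor such a description after
composing with the duality isomorphism, i.e. no subspace `U` of `(⋀^m V)^∨` with
a surjection `ε : U ↠ V` such that the Plücker line of `Vm` is the annihilator
of `ε⁻¹(Vm)` for all `Vm` (modified case). -/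
theorem stmt8 {V : Type*} [AddCommGroup V] [Module ℂ V] [FiniteDimensional ℂ V]
    (hdim : 3 ≤ finrank ℂ V) (m : ℕ) (hm : 2 ≤ m) (hm' : m ≤ finrank ℂ V - 2) :
    ¬ ((∃ (U : Submodule ℂ ↥(⋀[ℂ]^m V)) (ε : U →ₗ[ℂ] V),
          Function.Surjective ε ∧
          ∀ Vm : Submodule ℂ V, finrank ℂ Vm = m →
            pluckerLine m Vm = Submodule.map U.subtype (Submodule.comap ε Vm)) ∨
       (∃ (U : Submodule ℂ (Module.Dual ℂ ↥(⋀[ℂ]^m V))) (ε : U →ₗ[ℂ] V),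
          Function.Surjective ε ∧
          ∀ Vm : Submodule ℂ V, finrank ℂ Vm = m →
            pluckerLine m Vm =
              (Submodule.map U.subtype (Submodule.comap ε Vm)).dualCoannihilator)) := by
  classical
  have hmn : m + 2 ≤ finrank ℂ V := by omega
  haveI : FiniteDimensional ℂ (⋀[ℂ]^m V) := exteriorPower_fd m
  obtain ⟨Vm, hVm⟩ : ∃ Vm : Submodule ℂ V, finrank ℂ Vm = m := by
    let b := finBasis ℂ V
    refine ⟨Submodule.span ℂ (Set.range (⇑b ∘ Fin.castLE (by omega : m ≤ finrank ℂ V))), ?_⟩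
    rw [finrank_span_eq_card (b.linearIndependent.comp _
      (Fin.castLE_injective (by omega : m ≤ finrank ℂ V)))]
    simp
  have hple := pluckerLine_finrank_le_one Vm hVm
  rintro (⟨U, ε, hsurj, hall⟩ | ⟨U, ε, hsurj, hall⟩)
  · exact strict_aux hm Vm hVm _ hple U ε hsurj (hall Vm hVm)
  · exact dual_aux hmn Vm hVm _ hple U ε hsurj (hall Vm hVm)
end

section
/- Let ε₁ : U₁ → V and ε₂ : U₂ → V be surjective linear maps from subspaces U₁ ⊆ U₂ of a finite-dimensional vector space V', with ker ε₁ ⊆ ker ε₂, and suppose the induced map θ : V → V (defined by θ(ε₁(u)) = ε₂(u) for u ∈ U₁) is well-defined and nonzero. If for all pairs of subspaces V_{m₁} ⊆ V_{m₂} of V of dimensions m₁ ≤ m₂ (with 1 ≤ m₁ ≤ m₂ < dim V) one has ε₁⁻¹(V_{m₁}) ⊆ ε₂⁻¹(V_{m₂}), then θ = c·Id for some nonzero scalar c. -/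
open Module

private lemma aux_between {V : Type*} [AddCommGroup V] [Module ℂ V] [FiniteDimensional ℂ V]
    (p q : Submodule ℂ V) (hpq : p ≤ q) (k : ℕ) (h1 : finrank ℂ p ≤ k)
    (h2 : k ≤ finrank ℂ q) : ∃ W : Submodule ℂ V, p ≤ W ∧ W ≤ q ∧ finrank ℂ W = k := by
  induction k, h1 using Nat.le_induction with
  | base => exact ⟨p, le_rfl, hpq, rfl⟩
  | succ n hn ih =>
    obtain ⟨W, hpW, hWq, hW⟩ := ih (le_of_lt (Nat.lt_of_succ_le h2))
    have hlt : W < q := by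
      rcases lt_or_eq_of_le hWq with h | h
      · exact h
      · exfalso; rw [h] at hW; omega
    obtain ⟨x, hxq, hxW⟩ := SetLike.exists_of_lt hlt
    have hx0 : x ≠ 0 := fun h => hxW (h ▸ W.zero_mem)
    refine ⟨W ⊔ (ℂ ∙ x), le_trans hpW le_sup_left,
      sup_le hWq ((Submodule.span_singleton_le_iff_mem x q).2 hxq), ?_⟩
    have hdisj : Disjoint W (ℂ ∙ x) := (Submodule.disjoint_span_singleton' hx0).2 hxW
    have := Submodule.finrank_sup_add_finrank_inf_eq W (ℂ ∙ x)
    rw [hdisj.eq_bot] at this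
    simp only [finrank_bot] at this
    rw [finrank_span_singleton hx0] at this
    omega

private lemma aux_span {V : Type*} [AddCommGroup V] [Module ℂ V] [FiniteDimensional ℂ V]
    (θ : V →ₗ[ℂ] V) (hkey : ∀ v : V, θ v ∈ (ℂ ∙ v)) (hdim : 1 ≤ finrank ℂ V) :
    ∃ c : ℂ, θ = c • LinearMap.id := by
  have : Nontrivial V := Module.nontrivial_of_finrank_pos (R := ℂ) (by omega)
  obtain ⟨v₀, hv₀⟩ := exists_ne (0 : V)
  obtain ⟨c, hc⟩ := Submodule.mem_span_singleton.1 (hkey v₀)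
  refine ⟨c, ?_⟩
  ext v
  simp only [LinearMap.smul_apply, LinearMap.id_coe, id_eq]
  by_cases hdep : ∃ a : ℂ, a • v₀ = v
  · obtain ⟨a, rfl⟩ := hdep
    rw [map_smul, ← hc, smul_comm]
  · have hind : LinearIndependent ℂ ![v, v₀] := by
      rw [linearIndependent_fin2]
      refine ⟨hv₀, fun a h => hdep ⟨a, ?_⟩⟩
      simpa using h
    obtain ⟨a, ha⟩ := Submodule.mem_span_singleton.1 (hkey v)
    obtain ⟨e, he⟩ := Submodule.mem_span_singleton.1 (hkey (v₀ + v))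
    rw [map_add, ← hc, ← ha, smul_add] at he
    have hzero : (a - e) • v + (c - e) • v₀ = 0 := by
      rw [sub_smul, sub_smul,
        show a • v - e • v + (c • v₀ - e • v₀) = (c • v₀ + a • v) - (e • v₀ + e • v) by abel,
        ← he, sub_self]
    obtain ⟨h1, h2⟩ := hind.eq_zero_of_pair hzero
    have : a = c := by
      have h1' : a = e := by linear_combination h1
      have h2' : c = e := by linear_combination h2
      rw [h1', h2']
    rw [← ha, this]

/-- Let `ε₁ : U₁ ↠ V`, `ε₂ : U₂ ↠ V` be surjections from subspaces `U₁ ⊆ U₂` of `V'`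
with `ker ε₁ ⊆ ker ε₂`, and let `θ : V → V` be the induced operator
(`θ(ε₁ u) = ε₂ u` for `u ∈ U₁`), assumed nonzero.  If for all flags
`V_{m₁} ⊆ V_{m₂}` (with `1 ≤ m₁ ≤ m₂ < dim V`) one has
`ε₁⁻¹(V_{m₁}) ⊆ ε₂⁻¹(V_{m₂})`, then `θ` is a nonzero scalar multiple of the
identity. -/
theorem stmt10 {V V' : Type*}
    [AddCommGroup V] [Module ℂ V] [FiniteDimensional ℂ V]
    [AddCommGroup V'] [Module ℂ V'] [FiniteDimensional ℂ V']
    (U₁ U₂ : Submodule ℂ V') (hU : U₁ ≤ U₂)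
    (ε₁ : U₁ →ₗ[ℂ] V) (ε₂ : U₂ →ₗ[ℂ] V)
    (hs₁ : Function.Surjective ε₁) (hs₂ : Function.Surjective ε₂)
    (hker : ∀ u : U₁, ε₁ u = 0 → ε₂ (Submodule.inclusion hU u) = 0)
    (θ : V →ₗ[ℂ] V)
    (hθ : ∀ u : U₁, θ (ε₁ u) = ε₂ (Submodule.inclusion hU u))
    (hθ0 : θ ≠ 0)
    (m₁ m₂ : ℕ) (h1 : 1 ≤ m₁) (h12 : m₁ ≤ m₂) (h2 : m₂ < finrank ℂ V)
    (hsub : ∀ V₁ V₂ : Submodule ℂ V, finrank ℂ V₁ = m₁ → finrank ℂ V₂ = m₂ →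
      V₁ ≤ V₂ → ∀ u : U₁, ε₁ u ∈ V₁ → ε₂ (Submodule.inclusion hU u) ∈ V₂) :
    ∃ c : ℂ, c ≠ 0 ∧ θ = c • LinearMap.id := by
  have hn : 1 ≤ finrank ℂ V := by omega
  -- key step: every vector is mapped into its own span
  have hkey : ∀ v : V, θ v ∈ (ℂ ∙ v) := by
    intro v
    by_cases hv : v = 0
    · simp [hv]
    by_contra hmem
    have hθv0 : θ v ≠ 0 := fun h => hmem (h ▸ Submodule.zero_mem _)
    -- disjointness of the two spans
    have hdisj : Disjoint (ℂ ∙ v) (ℂ ∙ (θ v)) :=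
      (Submodule.disjoint_span_singleton' hθv0).2 hmem
    set S : Submodule ℂ V := (ℂ ∙ v) ⊔ (ℂ ∙ (θ v)) with hS
    have hSrank : finrank ℂ S = 2 := by
      have := Submodule.finrank_sup_add_finrank_inf_eq (ℂ ∙ v) (ℂ ∙ (θ v))
      rw [hdisj.eq_bot] at this
      simp only [finrank_bot] at this
      rw [finrank_span_singleton hv, finrank_span_singleton hθv0] at this
      rw [hS]
      omega
    obtain ⟨C, hC⟩ := Submodule.exists_isCompl S
    have hCrank : finrank ℂ C = finrank ℂ V - 2 := by
      have := Submodule.finrank_add_eq_of_isCompl hC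
      omega
    set H : Submodule ℂ V := (ℂ ∙ v) ⊔ C with hH
    have hvS : v ∈ S := le_sup_left (α := Submodule ℂ V) (Submodule.mem_span_singleton_self v)
    have hθvS : θ v ∈ S := le_sup_right (α := Submodule ℂ V)
      (Submodule.mem_span_singleton_self (θ v))
    -- θ v ∉ H
    have hθvH : θ v ∉ H := by
      intro h
      obtain ⟨y, hy, z, hz, hyz⟩ := Submodule.mem_sup.1 h
      obtain ⟨a, rfl⟩ := Submodule.mem_span_singleton.1 hy
      have hzS : z ∈ S := by
        have : z = θ v - a • v := by rw [← hyz]; abel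
        rw [this]
        exact Submodule.sub_mem _ hθvS (Submodule.smul_mem _ a hvS)
      have : z = 0 := by
        have := hC.disjoint.symm
        exact (Submodule.disjoint_def.1 this) z hz hzS
      rw [this, add_zero] at hyz
      exact hmem (hyz ▸ Submodule.smul_mem _ a (Submodule.mem_span_singleton_self v))
    -- v ∉ C
    have hvC : v ∉ C := by
      intro h
      have : v = 0 := (Submodule.disjoint_def.1 hC.disjoint.symm) v h hvS
      exact hv this
    have hdisj2 : Disjoint C (ℂ ∙ v) := (Submodule.disjoint_span_singleton' hv).2 hvC
    have hHrank : finrank ℂ H = finrank ℂ V - 1 := by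
      have := Submodule.finrank_sup_add_finrank_inf_eq (ℂ ∙ v) C
      rw [inf_comm, hdisj2.eq_bot] at this
      simp only [finrank_bot] at this
      rw [finrank_span_singleton hv] at this
      have h2le : 2 ≤ finrank ℂ V := by
        have := Submodule.finrank_le S
        omega
      rw [hH]
      omega
    have hvH : (ℂ ∙ v) ≤ H := le_sup_left
    have hrank1 : finrank ℂ (ℂ ∙ v) = 1 := finrank_span_singleton hv
    obtain ⟨W, hvW, hWH, hWrank⟩ := aux_between (ℂ ∙ v) H hvH m₂ (by omega) (by omega)
    obtain ⟨V₁, hvV₁, hV₁W, hV₁rank⟩ := aux_between (ℂ ∙ v) W hvW m₁ (by omega) (by omega)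
    obtain ⟨u, hu⟩ := hs₁ v
    have hmem1 : ε₁ u ∈ V₁ := by
      rw [hu]; exact hvV₁ (Submodule.mem_span_singleton_self v)
    have := hsub V₁ W hV₁rank hWrank hV₁W u hmem1
    rw [← hθ u, hu] at this
    exact hθvH (hWH this)
  obtain ⟨c, hc⟩ := aux_span θ hkey hn
  refine ⟨c, ?_, hc⟩
  intro h
  apply hθ0
  rw [hc, h, zero_smul]
end

section
/- In the setting of two surjections ε₁ : U₁ ↠ V and ε₂ : U₂ ↠ V with U₁ ⊆ U₂ ⊆ V', suppose m₂ < m₁ (both in the range 1 ≤ m < dim V) and suppose ε₁⁻¹(V_{m₁}) ⊆ ε₂⁻¹(V_{m₂}) holds for all pairs V_{m₂} ⊆ V_{m₁}. Then the induced operator θ : V → V is zero, and consequently U₁ ⊆ ker ε₂. -/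
open Module

/-- Between two nested submodules, there is an intermediate submodule of any
intermediate finrank. -/
lemma exists_intermediate_finrank {V : Type*} [AddCommGroup V] [Module ℂ V]
    [FiniteDimensional ℂ V] (k : ℕ) :
    ∀ N P : Submodule ℂ V, N ≤ P → finrank ℂ N ≤ k → k ≤ finrank ℂ P →
      ∃ W : Submodule ℂ V, N ≤ W ∧ W ≤ P ∧ finrank ℂ W = k := by
  induction k with
  | zero =>
    intro N P hNP hN _
    have : finrank ℂ N = 0 := Nat.le_zero.mp hN
    have hNbot : N = ⊥ := Submodule.finrank_eq_zero.mp this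
    exact ⟨⊥, le_of_eq hNbot, bot_le, finrank_bot ℂ V⟩
  | succ k ih =>
    intro N P hNP hN hP
    rcases Nat.lt_or_ge (finrank ℂ N) (k+1) with h | h
    · obtain ⟨W, hNW, hWP, hW⟩ := ih N P hNP (Nat.lt_succ_iff.mp h) (le_trans (Nat.le_succ k) hP)
      have hWltP : W < P := Submodule.lt_of_le_of_finrank_lt_finrank hWP (by omega)
      obtain ⟨x, hxP, hxW⟩ := SetLike.exists_of_lt hWltP
      have hx0 : x ≠ 0 := fun h => hxW (h ▸ W.zero_mem)
      refine ⟨W ⊔ Submodule.span ℂ {x}, le_trans hNW le_sup_left,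
        sup_le hWP (Submodule.span_le.mpr (Set.singleton_subset_iff.mpr hxP)), ?_⟩
      have hinf : W ⊓ Submodule.span ℂ {x} = ⊥ := by
        rw [Submodule.eq_bot_iff]
        intro y ⟨hyW, hySpan⟩
        obtain ⟨c, rfl⟩ := Submodule.mem_span_singleton.mp hySpan
        rcases eq_or_ne c 0 with rfl | hc
        · simp
        · exact absurd (by simpa [smul_smul, inv_mul_cancel₀ hc] using W.smul_mem c⁻¹ hyW) hxW
      have := Submodule.finrank_sup_add_finrank_inf_eq W (Submodule.span ℂ {x})
      rw [hinf, finrank_span_singleton hx0] at this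
      simp [finrank_bot] at this
      omega
    · exact ⟨N, le_refl N, hNP, le_antisymm hN h⟩

/-- In the setting of two surjections `ε₁ : U₁ ↠ V`, `ε₂ : U₂ ↠ V` with
`U₁ ⊆ U₂ ⊆ V'` and `ker ε₁ ⊆ ker ε₂`, if `m₂ < m₁` (both in `[1, dim V)`) and
`ε₁⁻¹(V_{m₁}) ⊆ ε₂⁻¹(V_{m₂})` for all pairs `V_{m₂} ⊆ V_{m₁}`, then the induced
operator `θ` is zero and `U₁ ⊆ ker ε₂`. -/
theorem stmt11 {V V' : Type*}
    [AddCommGroup V] [Module ℂ V] [FiniteDimensional ℂ V]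
    [AddCommGroup V'] [Module ℂ V'] [FiniteDimensional ℂ V']
    (U₁ U₂ : Submodule ℂ V') (hU : U₁ ≤ U₂)
    (ε₁ : U₁ →ₗ[ℂ] V) (ε₂ : U₂ →ₗ[ℂ] V)
    (hs₁ : Function.Surjective ε₁) (hs₂ : Function.Surjective ε₂)
    (hker : ∀ u : U₁, ε₁ u = 0 → ε₂ (Submodule.inclusion hU u) = 0)
    (θ : V →ₗ[ℂ] V)
    (hθ : ∀ u : U₁, θ (ε₁ u) = ε₂ (Submodule.inclusion hU u))
    (m₁ m₂ : ℕ) (h2 : 1 ≤ m₂) (h21 : m₂ < m₁) (h1 : m₁ < finrank ℂ V)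
    (hsub : ∀ V₁ V₂ : Submodule ℂ V, finrank ℂ V₁ = m₁ → finrank ℂ V₂ = m₂ →
      V₂ ≤ V₁ → ∀ u : U₁, ε₁ u ∈ V₁ → ε₂ (Submodule.inclusion hU u) ∈ V₂) :
    θ = 0 ∧ ∀ u : U₁, ε₂ (Submodule.inclusion hU u) = 0 := by
  have hθ0 : θ = 0 := by
    ext v
    by_contra hw
    simp only [LinearMap.zero_apply] at hw
    set w := θ v with hwdef
    -- a dual functional not vanishing on w
    have hf : ∃ f : Module.Dual ℂ V, f w ≠ 0 := by
      by_contra h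
      push_neg at h
      exact hw ((Module.forall_dual_apply_eq_zero_iff ℂ w).mp h)
    obtain ⟨f, hfw⟩ := hf
    -- a subspace V₁ of dim m₁ containing v
    have hsv : finrank ℂ (Submodule.span ℂ {v}) ≤ m₁ := by
      have : finrank ℂ (Submodule.span ℂ {v}) ≤ 1 := by
        simpa using finrank_span_le_card (R := ℂ) ({v} : Set V)
      omega
    obtain ⟨V₁, hvV₁, -, hV₁⟩ := exists_intermediate_finrank m₁ (Submodule.span ℂ {v}) ⊤
      le_top hsv (by simpa [finrank_top] using h1.le)
    -- the kernel of f restricted to V₁ has finrank ≥ m₂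
    set K := LinearMap.ker (f.domRestrict V₁) with hKdef
    have hKrank : m₂ ≤ finrank ℂ K := by
      have h3 := LinearMap.finrank_range_add_finrank_ker (f.domRestrict V₁)
      have h4 : finrank ℂ (LinearMap.range (f.domRestrict V₁)) ≤ 1 := by
        have := Submodule.finrank_le (LinearMap.range (f.domRestrict V₁))
        simpa using this
      rw [hV₁, ← hKdef] at h3
      omega
    -- shrink K to dimension m₂
    obtain ⟨K', -, hK'K, hK'⟩ := exists_intermediate_finrank (V := V₁) m₂ ⊥ K bot_le
      (by simp [finrank_bot]) hKrank
    set W₂ := K'.map V₁.subtype with hW₂def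
    have hW₂rank : finrank ℂ W₂ = m₂ := by
      rw [hW₂def, Submodule.finrank_map_subtype_eq]; exact hK'
    have hW₂le : W₂ ≤ V₁ := Submodule.map_subtype_le V₁ K'
    -- conclude w ∈ W₂ from hsub
    obtain ⟨u, hu⟩ := hs₁ v
    have hvmem : v ∈ V₁ := hvV₁ (Submodule.mem_span_singleton_self v)
    have hmem := hsub V₁ W₂ hV₁ hW₂rank hW₂le u (by rw [hu]; exact hvmem)
    rw [← hθ u, hu, ← hwdef] at hmem
    -- but f vanishes on W₂
    obtain ⟨y, hyK', hy⟩ := hmem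
    have : f w = 0 := by
      rw [← hy]
      exact hK'K hyK'
    exact hfw this
  refine ⟨hθ0, fun u => ?_⟩
  rw [← hθ u, hθ0, LinearMap.zero_apply]
end
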